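/- Let h > 0 and k ∈ ℝ (with h < π/(2√(4k)) if k > 0). Let f(s) = ck_{4k}(s) − h₁·sk_{4k}(s) where h₁ = ck_{4k}(h)/sk_{4k}(h). Then for all 0 ≤ ℓ < h, f(ℓ) ≠ 0 and f'(ℓ)/f(ℓ) = −ck_{4k}(h−ℓ)/sk_{4k}(h−ℓ). -/

import Mathlib

/-!
By the subtraction formula for `sk`, `f(s) = sk(h - s) / sk(h)`: `f` is, up to a constant, the
solution of `f'' + 4kf = 0` vanishing at `h`. Hence `f'/f = -ck(h - s)/sk(h - s)`, and `f` does not vanish on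
`[0, h)` because `sk` is positive on `(0, h]`: for positive curvature, `√(4k) h < π/2 < π`.
-/

open Real in
/-- The generalized sine function for curvature `k`: the solution of `φ'' + kφ = 0`
with `φ(0) = 0`, `φ'(0) = 1`. -/
noncomputable def sk (k t : ℝ) : ℝ :=
  if k < 0 then Real.sinh (Real.sqrt (-k) * t) / Real.sqrt (-k)
  else if k = 0 then t
  else Real.sin (Real.sqrt k * t) / Real.sqrt k

open Real in
/-- The generalized cosine function for curvature `k`: `ck k = (sk k)'`. -/
noncomputable def ck (k t : ℝ) : ℝ :=
  if k < 0 then Real.cosh (Real.sqrt (-k) * t)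
  else if k = 0 then 1
  else Real.cos (Real.sqrt k * t)

open Real

section GeneralizedTrig

variable {m : ℝ}

theorem sk_of_neg (hm : m < 0) (t : ℝ) : sk m t = sinh (√(-m) * t) / √(-m) := if_pos hm

theorem ck_of_neg (hm : m < 0) (t : ℝ) : ck m t = cosh (√(-m) * t) := if_pos hm

theorem sk_zero_left (t : ℝ) : sk 0 t = t := by simp [sk]

theorem ck_zero_left (t : ℝ) : ck 0 t = 1 := by simp [ck]

theorem sk_of_pos (hm : 0 < m) (t : ℝ) : sk m t = sin (√m * t) / √m := by
  simp [sk, hm.not_gt, hm.ne']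

theorem ck_of_pos (hm : 0 < m) (t : ℝ) : ck m t = cos (√m * t) := by
  simp [ck, hm.not_gt, hm.ne']

theorem hasDerivAt_sk (m t : ℝ) : HasDerivAt (sk m) (ck m t) t := by
  rcases lt_trichotomy m 0 with hm | rfl | hm
  · have hc : √(-m) ≠ 0 := (sqrt_pos.2 (neg_pos.2 hm)).ne'
    rw [funext (sk_of_neg hm), ck_of_neg hm]
    exact (((hasDerivAt_id' t).const_mul √(-m)).sinh.div_const √(-m)).congr_deriv
      (by field_simp)
  · rw [funext sk_zero_left, ck_zero_left]
    exact hasDerivAt_id t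
  · have hc : √m ≠ 0 := (sqrt_pos.2 hm).ne'
    rw [funext (sk_of_pos hm), ck_of_pos hm]
    exact (((hasDerivAt_id' t).const_mul √m).sin.div_const √m).congr_deriv (by field_simp)

theorem sk_sub (m a b : ℝ) : sk m (a - b) = sk m a * ck m b - ck m a * sk m b := by
  rcases lt_trichotomy m 0 with hm | rfl | hm
  · simp only [sk_of_neg hm, ck_of_neg hm, mul_sub, sinh_sub]
    ring
  · simp [sk_zero_left, ck_zero_left]
  · simp only [sk_of_pos hm, ck_of_pos hm, mul_sub, sin_sub]
    ring

theorem sk_pos {t : ℝ} (ht : 0 < t) (htm : 0 < m → √m * t < π) : 0 < sk m t := by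
  rcases lt_trichotomy m 0 with hm | rfl | hm
  · have hc : 0 < √(-m) := sqrt_pos.2 (neg_pos.2 hm)
    rw [sk_of_neg hm]
    exact div_pos (sinh_pos_iff.2 (mul_pos hc ht)) hc
  · rwa [sk_zero_left]
  · have hc : 0 < √m := sqrt_pos.2 hm
    rw [sk_of_pos hm]
    exact div_pos (sin_pos_of_pos_of_lt_pi (mul_pos hc ht) (htm hm)) hc

theorem ck_sub_div_mul_sk {h : ℝ} (hh : sk m h ≠ 0) (s : ℝ) :
    ck m s - ck m h / sk m h * sk m s = sk m (h - s) / sk m h := by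
  rw [sk_sub]
  field_simp

end GeneralizedTrig

/-- Let `h > 0` (with `h < π/(2√(4k))` if `k > 0`), `h₁ = ck (4k) h / sk (4k) h`, and
`f(s) = ck (4k) s − h₁ · sk (4k) s` (the solution of `f'' + 4kf = 0`, `f 0 = 1`,
`f' 0 = −h₁`). Then for all `0 ≤ ℓ < h`, `f ℓ ≠ 0` and
`f'(ℓ)/f(ℓ) = −ck (4k) (h−ℓ) / sk (4k) (h−ℓ)`. -/
theorem logDeriv_f (k h : ℝ) (hh : 0 < h)
    (hhk : 0 < k → h < Real.pi / (2 * Real.sqrt (4 * k))) :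
    ∀ ℓ : ℝ, 0 ≤ ℓ → ℓ < h →
      (fun s => ck (4 * k) s - (ck (4 * k) h / sk (4 * k) h) * sk (4 * k) s) ℓ ≠ 0 ∧
      deriv (fun s => ck (4 * k) s - (ck (4 * k) h / sk (4 * k) h) * sk (4 * k) s) ℓ /
          (ck (4 * k) ℓ - (ck (4 * k) h / sk (4 * k) h) * sk (4 * k) ℓ)
        = -(ck (4 * k) (h - ℓ) / sk (4 * k) (h - ℓ)) := by
  intro ℓ hℓ hℓh
  have hsk_pos : ∀ t, 0 < t → t ≤ h → 0 < sk (4 * k) t := fun t ht hth ↦ by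
    refine sk_pos ht fun hm ↦ ?_
    have hc : 0 < √(4 * k) := sqrt_pos.2 hm
    have hch : h * (2 * √(4 * k)) < π := (lt_div_iff₀ (by positivity)).1 (hhk (by linarith))
    nlinarith [pi_pos]
  have hh' := (hsk_pos h hh le_rfl).ne'
  have hhℓ := (hsk_pos (h - ℓ) (by linarith) (by linarith)).ne'
  simp_rw [ck_sub_div_mul_sk hh']
  have hderiv := ((hasDerivAt_sk (4 * k) (h - ℓ)).comp_const_sub h ℓ).div_const (sk (4 * k) h)
  refine ⟨div_ne_zero hhℓ hh', ?_⟩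
  rw [hderiv.deriv]
  field_simp
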